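/- Let Γ = {φ₀,...,φ_m, φ} and Δ = {ψ₀,...,ψ_n} be syntactically disjoint sets of formulas (no shared atoms), and suppose {ψ₀,...,ψ_n} is satisfiable. If {φ₀,...,φ_m, ψ₀,...,ψ_n} ⊨_C φ, then {φ₀,...,φ_m} ⊨_C φ. -/

import Mathlib

namespace ASPIC

/-- An underlying logical language: formulas, atoms, interpretations, a classical
negation and conjunction, and the interpolation-style assumption on syntactically
disjoint sets of formulas. -/
structure Logic where
  F : Type
  Atom : Type
  atoms : F → Set Atom
  I : Type
  inhab : Nonempty I
  Models : I → F → Prop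
  neg : F → F
  conj : F → F → F
  neg_spec : ∀ i φ, Models i (neg φ) ↔ ¬ Models i φ
  conj_spec : ∀ i φ ψ, Models i (conj φ ψ) ↔ (Models i φ ∧ Models i ψ)
  atoms_neg : ∀ φ, atoms (neg φ) = atoms φ
  atoms_conj : ∀ φ ψ, atoms (conj φ ψ) = atoms φ ∪ atoms ψ
  interp : ∀ Γ Δ : Set F, (∀ φ ∈ Γ, ∀ ψ ∈ Δ, atoms φ ∩ atoms ψ = ∅) →
    (∃ i, ∀ φ ∈ Γ, Models i φ) → (∃ i, ∀ ψ ∈ Δ, Models i ψ) →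
    (∃ i, (∀ φ ∈ Γ, Models i φ) ∧ (∀ ψ ∈ Δ, Models i ψ))

/-- The model-based consequence relation ⊨_C. -/
def Conseq (L : Logic) (Γ : Set L.F) (φ : L.F) : Prop :=
  ∀ i, (∀ ψ ∈ Γ, L.Models i ψ) → L.Models i φ

/-- φ = −ψ: one formula is the negation of the other. -/
def negOf (L : Logic) (φ ψ : L.F) : Prop := φ = L.neg ψ ∨ ψ = L.neg φ

/-- Conjunction of a nonempty list of formulas: conjL L φ [ψ₁,…] = φ ∧ ψ₁ ∧ … . -/
def conjL (L : Logic) : L.F → List L.F → L.F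
  | φ, [] => φ
  | φ, ψ :: l => L.conj φ (conjL L ψ l)

/-- A (defeasible) rule: antecedents and conclusion. -/
abbrev Rule (L : Logic) := List L.F × L.F

/-- An argumentation system of Deductive ASPIC⊖: satisfiable axioms, defeasible rules,
a (partial) naming function and a total preorder on defeasible rules.  The strict rules
are the axiomatic rules together with all consequence-based rules. -/
structure ASys (L : Logic) where
  AX : Set L.F
  AX_sat : ∃ i, ∀ φ ∈ AX, L.Models i φ
  Rd : Set (Rule L)
  name : Rule L → Option L.F
  rpref : Rule L → Rule L → Prop
  rpref_refl : ∀ r, rpref r r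
  rpref_trans : ∀ r s t, rpref r s → rpref s t → rpref r t
  rpref_total : ∀ r s, rpref r s ∨ rpref s r

/-- Top-rule kinds: axiomatic, consequence-based strict, defeasible. -/
inductive RK : Type
  | ax | cb | df
deriving DecidableEq

/-- Argument trees (with the kind of the top rule and the conclusion recorded). -/
inductive Arg (L : Logic) : Type
  | node (k : RK) (subs : List (Arg L)) (concl : L.F)

def Arg.concl {L : Logic} : Arg L → L.F
  | .node _ _ φ => φ

def Arg.subs {L : Logic} : Arg L → List (Arg L)
  | .node _ s _ => s

def Arg.kind {L : Logic} : Arg L → RK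
  | .node k _ _ => k

/-- Well-formed arguments of an argumentation system. -/
inductive Wf (L : Logic) (as : ASys L) : Arg L → Prop
  | ax (φ : L.F) (h : φ ∈ as.AX) : Wf L as (.node .ax [] φ)
  | cb (subs : List (Arg L)) (φ : L.F) (hs : ∀ a ∈ subs, Wf L as a)
      (h : Conseq L {ψ | ∃ a ∈ subs, Arg.concl a = ψ} φ) : Wf L as (.node .cb subs φ)
  | df (subs : List (Arg L)) (φ : L.F) (hs : ∀ a ∈ subs, Wf L as a)
      (h : (subs.map Arg.concl, φ) ∈ as.Rd) : Wf L as (.node .df subs φ)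

/-- Sub-argument relation: `Sub a b` means a is a sub-argument of b. -/
inductive Sub (L : Logic) : Arg L → Arg L → Prop
  | refl (a : Arg L) : Sub L a a
  | step (a b : Arg L) (k : RK) (subs : List (Arg L)) (φ : L.F)
      (hb : b ∈ subs) (h : Sub L a b) : Sub L a (.node k subs φ)

/-- Conclusions of the sub-arguments of a. -/
def SubC (L : Logic) (a : Arg L) : Set L.F := {φ | ∃ b, Sub L b a ∧ Arg.concl b = φ}

/-- Axiomatic and defeasible sub-arguments. -/
def ADSub (L : Logic) (a : Arg L) : Set (Arg L) := {b | Sub L b a ∧ Arg.kind b ≠ RK.cb}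

/-- Conclusions of the axiomatic and defeasible sub-arguments. -/
def ADSubC (L : Logic) (a : Arg L) : Set L.F :=
  {φ | ∃ b, Sub L b a ∧ Arg.kind b ≠ RK.cb ∧ Arg.concl b = φ}

/-- Defeasible rules used in an argument. -/
def DR (L : Logic) (a : Arg L) : Set (Rule L) :=
  {r | ∃ subs, Sub L (Arg.node RK.df subs r.2) a ∧ r.1 = subs.map Arg.concl}

/-- Strict arguments: no defeasible rules used. -/
def IsStrictArg (L : Logic) (a : Arg L) : Prop := DR L a = ∅

/-- Elitist weakest-link lifting of the rule preorder to arguments (a ⪯_ewl b). -/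
def ewl (L : Logic) (as : ASys L) (a b : Arg L) : Prop :=
  (DR L a = ∅ ∧ DR L b = ∅) ∨ ∃ ra ∈ DR L a, ∀ rb ∈ DR L b, as.rpref ra rb

/-- a undercuts b: the conclusion of a is the negation of the name of a defeasible rule
used in b. -/
def Undercuts (L : Logic) (as : ASys L) (a b : Arg L) : Prop :=
  ∃ subs φ, Sub L (Arg.node RK.df subs φ) b ∧
    ∃ nm, as.name (subs.map Arg.concl, φ) = some nm ∧ negOf L (Arg.concl a) nm

/-- a gen-rebuts b: b is defeasible and the conclusion of a is the negation of a conjunction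
of conclusions of sub-arguments of b. -/
def GenRebuts (L : Logic) (a b : Arg L) : Prop :=
  DR L b ≠ ∅ ∧ ∃ (φ : L.F) (l : List L.F),
    (∀ χ ∈ φ :: l, χ ∈ SubC L b) ∧ Arg.concl a = L.neg (conjL L φ l)

/-- a defeats b: a undercuts b, or a gen-rebuts b and a is not strictly weaker than b. -/
def Defeats (L : Logic) (as : ASys L) (a b : Arg L) : Prop :=
  Undercuts L as a b ∨
    (GenRebuts L a b ∧ ¬ (ewl L as a b ∧ ¬ ewl L as b a))

/-- The strict rules of an argumentation system: axiomatic or consequence-based. -/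
def StrictRule (L : Logic) (as : ASys L) (r : Rule L) : Prop :=
  (r.1 = [] ∧ r.2 ∈ as.AX) ∨ Conseq L {φ | φ ∈ r.1} r.2

end ASPIC

namespace ASPIC

variable {L : Logic} {Γ Δ : Set L.F} {φ : L.F}

lemma disjoint_insert_neg (hdisj : ∀ χ ∈ insert φ Γ, ∀ ψ ∈ Δ, L.atoms χ ∩ L.atoms ψ = ∅) :
    ∀ χ ∈ insert (L.neg φ) Γ, ∀ ψ ∈ Δ, L.atoms χ ∩ L.atoms ψ = ∅ := by
  rw [Set.forall_mem_insert, L.atoms_neg]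
  exact Set.forall_mem_insert.mp hdisj

/-- A countermodel of `Γ ⊨_C φ` satisfies `Γ ∪ {¬φ}`, which shares no atoms with `Δ`; by the
interpolation assumption it merges with a model of `Δ` into a countermodel of `Γ ∪ Δ ⊨_C φ`. -/
theorem Conseq.of_union_of_disjoint
    (hdisj : ∀ χ ∈ insert φ Γ, ∀ ψ ∈ Δ, L.atoms χ ∩ L.atoms ψ = ∅)
    (hsat : ∃ i, ∀ ψ ∈ Δ, L.Models i ψ) (h : Conseq L (Γ ∪ Δ) φ) : Conseq L Γ φ := by
  intro i hi
  by_contra hφ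
  have hcounter : ∃ i, ∀ χ ∈ insert (L.neg φ) Γ, L.Models i χ :=
    ⟨i, Set.forall_mem_insert.mpr ⟨(L.neg_spec i φ).mpr hφ, hi⟩⟩
  obtain ⟨j, hjΓ, hjΔ⟩ := L.interp _ _ (disjoint_insert_neg hdisj) hcounter hsat
  have hjφ : L.Models j φ := h j fun χ hχ => hχ.elim (fun hχ => hjΓ χ (.inr hχ)) (hjΔ χ)
  exact (L.neg_spec j φ).mp (hjΓ _ (.inl rfl)) hjφ

end ASPIC

open ASPIC in
/-- If Γ = {φ₀,…,φ_m, φ} and Δ = {ψ₀,…,ψ_n} are syntactically disjoint sets of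
formulas and Δ is satisfiable, then {φ₀,…,φ_m} ∪ Δ ⊨_C φ implies {φ₀,…,φ_m} ⊨_C φ. -/
theorem disjoint_premises_eliminable (L : Logic)
    (lΓ : List L.F) (φ : L.F) (lΔ : List L.F)
    (hdisj : ∀ χ ∈ φ :: lΓ, ∀ ψ ∈ lΔ, L.atoms χ ∩ L.atoms ψ = ∅)
    (hsat : ∃ i, ∀ ψ ∈ lΔ, L.Models i ψ)
    (h : Conseq L ({χ | χ ∈ lΓ} ∪ {ψ | ψ ∈ lΔ}) φ) :
    Conseq L {χ | χ ∈ lΓ} φ :=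
  Conseq.of_union_of_disjoint (fun χ hχ => hdisj χ (List.mem_cons.mpr hχ)) hsat h
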